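/- Let $d_1,d_2\in\mathbb{Z}\cup\{-\infty\}$ (with the convention $2^{-\infty}=0$) and $t\in\{0,1\}$, and suppose the double series $F_0(X)=\frac{\prod_{j=0}^\infty(1+2^{-j}X)}{\prod_{j=0}^\infty(1+2^{-j})}\sum_{i_1,i_2\geq 0}2^{i_1 t_1+i_2 t_2}\cdot\frac{2^{2i_1 i_2}\prod_{j=1}^{i_1+i_2}(2^{1-j}X-1)}{\prod_{j=1}^{i_1}(2^{2j}-1)\prod_{j=1}^{i_2}(2^{2j}-1)}$ is evaluated at $X=2$, with $t_1+t_2\leq 0$. Then, setting $F(X)=F_0(X)+(-1)^t F_0(-X)$, one has $F(2)=F_0(2)=3+2^{t_1}+2^{t_2}$. -/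

import Mathlib

lemma aux_mult (c : ℝ) (hc : 0 ≤ c) :
    Multipliable (fun j : ℕ => 1 + c * (2 : ℝ) ^ (-(j : ℤ))) := by
  set f : ℕ → ℝ := fun j => 1 + c * (2 : ℝ) ^ (-(j : ℤ)) with hf
  have hconv : ∀ j : ℕ, (2 : ℝ) ^ (-(j : ℤ)) = (1/2 : ℝ) ^ j := by
    intro j; rw [zpow_neg, zpow_natCast, one_div, inv_pow]
  have hge : ∀ j, (1 : ℝ) ≤ f j := by
    intro j
    have : 0 ≤ c * (2 : ℝ) ^ (-(j : ℤ)) :=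
      mul_nonneg hc (le_of_lt (zpow_pos (by norm_num) _))
    simp [hf]; linarith
  have hsum : Summable (fun j : ℕ => c * (1/2 : ℝ) ^ j) :=
    (summable_geometric_of_lt_one (by norm_num) (by norm_num)).mul_left c
  have hprodge : ∀ s : Finset ℕ, (1:ℝ) ≤ ∏ j ∈ s, f j := by
    intro s
    have := Finset.prod_le_prod (f := fun _ : ℕ => (1:ℝ)) (g := f)
      (s := s) (fun i _ => by norm_num) (fun i _ => hge i)
    simpa using this
  have hmono : Monotone (fun s : Finset ℕ => ∏ j ∈ s, f j) := by
    intro s t hst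
    show ∏ j ∈ s, f j ≤ ∏ j ∈ t, f j
    rw [← Finset.prod_sdiff hst]
    exact le_mul_of_one_le_left (by linarith [hprodge s]) (hprodge (t \ s))
  have hbdd : BddAbove (Set.range (fun s : Finset ℕ => ∏ j ∈ s, f j)) := by
    refine ⟨Real.exp (∑' j : ℕ, c * (1/2:ℝ)^j), ?_⟩
    rintro x ⟨s, rfl⟩
    calc ∏ j ∈ s, f j ≤ ∏ j ∈ s, Real.exp (c * (1/2:ℝ)^j) := by
          refine Finset.prod_le_prod (fun i _ => by linarith [hge i]) ?_
          intro i _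
          have := Real.add_one_le_exp (c * (1/2:ℝ)^i)
          simp only [hf, hconv]
          linarith
      _ = Real.exp (∑ j ∈ s, c * (1/2:ℝ)^j) := by rw [Real.exp_sum]
      _ ≤ Real.exp (∑' j : ℕ, c * (1/2:ℝ)^j) := by
          apply Real.exp_le_exp.2
          exact Summable.sum_le_tsum s (fun i _ => mul_nonneg hc (by positivity)) hsum
  exact ⟨_, tendsto_atTop_ciSup hmono hbdd⟩

lemma aux_one_le (c : ℝ) (hc : 0 ≤ c) :
    (1 : ℝ) ≤ ∏' j : ℕ, (1 + c * (2 : ℝ) ^ (-(j : ℤ))) := by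
  have hm := aux_mult c hc
  refine ge_of_tendsto' hm.hasProd (fun s => ?_)
  have := Finset.prod_le_prod (f := fun _ : ℕ => (1:ℝ))
    (g := fun j : ℕ => 1 + c * (2 : ℝ) ^ (-(j : ℤ))) (s := s)
    (fun i _ => by norm_num)
    (fun i _ => by
      show (1:ℝ) ≤ 1 + c * (2 : ℝ) ^ (-(i : ℤ))
      have : 0 ≤ c * (2 : ℝ) ^ (-(i : ℤ)) :=
        mul_nonneg hc (le_of_lt (zpow_pos (by norm_num) _))
      linarith)
  simpa using this

lemma aux_zero : (∏' j : ℕ, (1 + (2 : ℝ) ^ (-(j : ℤ)) * (-2))) = 0 := by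
  have h : HasProd (fun j : ℕ => 1 + (2 : ℝ) ^ (-(j : ℤ)) * (-2)) 0 := by
    have hev : ∀ᶠ s : Finset ℕ in Filter.atTop,
        ∏ j ∈ s, (1 + (2 : ℝ) ^ (-(j : ℤ)) * (-2)) = 0 := by
      filter_upwards [Filter.eventually_ge_atTop ({1} : Finset ℕ)] with s hs
      refine Finset.prod_eq_zero (Finset.singleton_subset_iff.mp hs) ?_
      norm_num
    exact Filter.Tendsto.congr' (hev.mono fun s h => h.symm) tendsto_const_nhds
  exact h.tprod_eq

set_option maxHeartbeats 1000000 in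
lemma aux_tel : (∏' j : ℕ, (1 + 2 * (2 : ℝ) ^ (-(j : ℤ))))
    = 3 * ∏' j : ℕ, (1 + (2 : ℝ) ^ (-(j : ℤ))) := by
  have key : ∀ j : ℕ, 1 + 2 * (2:ℝ) ^ (-((j+1 : ℕ) : ℤ)) = 1 + (2:ℝ) ^ (-(j:ℤ)) := by
    intro j
    rw [show (2:ℝ) * 2 ^ (-((j+1 : ℕ) : ℤ)) = 2 ^ (1 + -((j+1 : ℕ) : ℤ)) from by
      rw [zpow_add₀ (two_ne_zero), zpow_one]]
    congr 2
    push_cast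
    ring
  have hm1 : Multipliable (fun n : ℕ => 1 + 2 * (2:ℝ) ^ (-((n+1 : ℕ) : ℤ))) := by
    refine (aux_mult 1 (by norm_num)).congr (fun j => ?_)
    rw [key j, one_mul]
  rw [tprod_eq_zero_mul' hm1]
  rw [show 1 + 2 * (2:ℝ) ^ (-((0:ℕ) : ℤ)) = 3 from by norm_num]
  congr 1
  exact tprod_congr key

/-- `2^t` for `t ∈ ℤ ∪ {-∞}`, with the convention `2^{-∞} = 0`. -/
noncomputable def pow2E : WithBot ℤ → ℝ :=
  fun t => WithBot.recBotCoe 0 (fun n : ℤ => (2 : ℝ) ^ n) t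

/-- for the type (C) generating function `F₀` with parameters
`t₁, t₂ ∈ ℤ ∪ {-∞}` satisfying `t₁ + t₂ ≤ 0`, and `F(X) = F₀(X) + (-1)^t F₀(-X)`,
one has `F(2) = F₀(2) = 3 + 2^{t₁} + 2^{t₂}`. -/
theorem stmt_19 (t₁ t₂ : WithBot ℤ) (ht : t₁ + t₂ ≤ 0) (t : ℕ) (htt : t ≤ 1) :
    let w₁ : ℝ := pow2E t₁
    let w₂ : ℝ := pow2E t₂
    let F0 : ℝ → ℝ := fun X =>
      (∏' j : ℕ, (1 + (2 : ℝ) ^ (-(j : ℤ)) * X))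
        / (∏' j : ℕ, (1 + (2 : ℝ) ^ (-(j : ℤ)))) *
      ∑' i : ℕ × ℕ,
        w₁ ^ i.1 * w₂ ^ i.2 * (2 : ℝ) ^ (2 * i.1 * i.2) *
          (∏ j ∈ Finset.range (i.1 + i.2), ((2 : ℝ) ^ (-(j : ℤ)) * X - 1)) /
          ((∏ j ∈ Finset.range i.1, ((2 : ℝ) ^ (2 * (j + 1)) - 1)) *
           (∏ j ∈ Finset.range i.2, ((2 : ℝ) ^ (2 * (j + 1)) - 1)))
    F0 2 + (-1 : ℝ) ^ t * F0 (-2) = 3 + w₁ + w₂ ∧ F0 2 = 3 + w₁ + w₂ := by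
  intro w₁ w₂ F0
  -- the product at the denominator
  set D : ℝ := ∏' j : ℕ, (1 + (2 : ℝ) ^ (-(j : ℤ))) with hD
  have hD1 : (1 : ℝ) ≤ D := by
    have := aux_one_le 1 (by norm_num)
    simpa [hD] using this
  have hDne : D ≠ 0 := by linarith
  -- F0 (-2) = 0
  have hz : F0 (-2) = 0 := by
    show (∏' j : ℕ, (1 + (2 : ℝ) ^ (-(j : ℤ)) * (-2))) / D * _ = 0
    rw [aux_zero, zero_div, zero_mul]
  -- numerator product at X = 2
  have hN : (∏' j : ℕ, (1 + (2 : ℝ) ^ (-(j : ℤ)) * 2)) = 3 * D := by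
    rw [← aux_tel]
    exact tprod_congr (fun j => by ring)
  -- the sum at X = 2
  have hS : (∑' i : ℕ × ℕ,
        w₁ ^ i.1 * w₂ ^ i.2 * (2 : ℝ) ^ (2 * i.1 * i.2) *
          (∏ j ∈ Finset.range (i.1 + i.2), ((2 : ℝ) ^ (-(j : ℤ)) * 2 - 1)) /
          ((∏ j ∈ Finset.range i.1, ((2 : ℝ) ^ (2 * (j + 1)) - 1)) *
           (∏ j ∈ Finset.range i.2, ((2 : ℝ) ^ (2 * (j + 1)) - 1))))
      = 1 + w₁ / 3 + w₂ / 3 := by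
    rw [tsum_eq_sum (s := ({(0,0), (1,0), (0,1)} : Finset (ℕ × ℕ))) ?_]
    · rw [Finset.sum_insert (by decide), Finset.sum_insert (by decide),
        Finset.sum_singleton]
      norm_num
      ring
    · rintro ⟨a, b⟩ hp
      simp only [Finset.mem_insert, Finset.mem_singleton, Prod.mk.injEq] at hp
      push_neg at hp
      have hab : 2 ≤ a + b := by omega
      have h1 : (1 : ℕ) ∈ Finset.range (a + b) := Finset.mem_range.mpr (by omega)
      have : (∏ j ∈ Finset.range (a + b), ((2 : ℝ) ^ (-(j : ℤ)) * 2 - 1)) = 0 :=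
        Finset.prod_eq_zero h1 (by norm_num)
      simp only []
      rw [this, mul_zero, zero_div]
  have h2 : F0 2 = 3 + w₁ + w₂ := by
    show (∏' j : ℕ, (1 + (2 : ℝ) ^ (-(j : ℤ)) * 2)) / D * _ = _
    rw [hN, hS, mul_div_assoc, div_self hDne]
    ring
  exact ⟨by rw [h2, hz, mul_zero, add_zero], h2⟩
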